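/- Let A be a commutative ring, S ⊆ A multiplicatively closed, M an A-module, and T ⊆ M a submodule with T·s₀ = 0 for some s₀ ∈ S. Then M is S-noetherian if and only if M/T is S-noetherian. -/

import Mathlib

/-- A submodule `N` is `S`-finite if there is a finitely generated submodule `F ⊆ N`
and `s ∈ S` with `N • s ⊆ F`. -/
def SFin {A : Type*} [CommRing A] (S : Submonoid A) {M : Type*} [AddCommGroup M]
    [Module A M] (N : Submodule A M) : Prop :=
  ∃ F : Submodule A M, F.FG ∧ F ≤ N ∧ ∃ s ∈ S, ∀ x ∈ N, s • x ∈ F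

/-- A module `M` is `S`-noetherian if every submodule is `S`-finite. -/
def SNoeth {A : Type*} [CommRing A] (S : Submonoid A) (M : Type*) [AddCommGroup M]
    [Module A M] : Prop :=
  ∀ N : Submodule A M, SFin S N

/-! S-finiteness passes to images under linear maps, which gives `M → M ⧸ T`. Conversely, if
`s • N̄ ⊆ F̄` in `M ⧸ T` with `F̄` finitely generated, lift generators of `F̄` to a finitely
generated `F ⊆ N`; then `s • x ∈ F + T` for `x ∈ N`, and multiplying by `s₀` kills the
`T`-component, so `(s₀ * s) • N ⊆ F`. -/

theorem Submodule.exists_fg_le_map_eq {R M M' : Type*} [Semiring R] [AddCommMonoid M] [Module R M]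
    [AddCommMonoid M'] [Module R M'] {f : M →ₗ[R] M'} {N : Submodule R M} {F' : Submodule R M'}
    (hF' : F'.FG) (hF'N : F' ≤ N.map f) : ∃ F : Submodule R M, F.FG ∧ F ≤ N ∧ F.map f = F' := by
  classical
  obtain ⟨G, rfl⟩ := hF'
  have hG : (G : Set M') ⊆ f '' N := (Submodule.subset_span.trans hF'N :)
  obtain ⟨G₀, hG₀N, rfl⟩ := Finset.subset_set_image_iff.mp hG
  refine ⟨Submodule.span R G₀, ⟨G₀, rfl⟩, Submodule.span_le.mpr hG₀N, ?_⟩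
  rw [Submodule.map_span, Finset.coe_image]

namespace SFin

variable {A : Type*} [CommRing A] {S : Submonoid A} {M M' : Type*} [AddCommGroup M] [Module A M]
  [AddCommGroup M'] [Module A M']

theorem map {N : Submodule A M} (hN : SFin S N) (f : M →ₗ[A] M') : SFin S (N.map f) := by
  obtain ⟨F, hF, hFN, s, hs, hsN⟩ := hN
  refine ⟨F.map f, hF.map f, Submodule.map_mono hFN, s, hs, ?_⟩
  rintro _ ⟨x, hx, rfl⟩
  exact ⟨s • x, hsN x hx, map_smul f s x⟩

theorem of_map {N : Submodule A M} {f : M →ₗ[A] M'} {s₀ : A} (hs₀ : s₀ ∈ S)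
    (hker : ∀ x ∈ LinearMap.ker f, s₀ • x = 0) (hN : SFin S (N.map f)) : SFin S N := by
  obtain ⟨F', hF', hF'N, s, hs, hsN⟩ := hN
  obtain ⟨F, hF, hFN, rfl⟩ := Submodule.exists_fg_le_map_eq hF' hF'N
  refine ⟨F, hF, hFN, s₀ * s, S.mul_mem hs₀ hs, fun x hx => ?_⟩
  obtain ⟨y, hy, hfy⟩ := hsN (f x) (Submodule.mem_map_of_mem hx)
  have hdiff : s • x - y ∈ LinearMap.ker f := by
    rw [LinearMap.sub_mem_ker_iff, map_smul, hfy]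
  have hsx : (s₀ * s) • x = s₀ • y := by
    rw [mul_smul, ← sub_eq_zero, ← smul_sub]
    exact hker _ hdiff
  rw [hsx]
  exact F.smul_mem s₀ hy

end SFin

theorem stmt12 {A : Type*} [CommRing A] (S : Submonoid A) {M : Type*} [AddCommGroup M]
    [Module A M] (T : Submodule A M) (hT : ∃ s₀ ∈ S, ∀ x ∈ T, s₀ • x = 0) :
    SNoeth S M ↔ SNoeth S (M ⧸ T) := by
  obtain ⟨s₀, hs₀, hT⟩ := hT
  refine ⟨fun hM N => ?_, fun hQ N => ?_⟩
  · rw [← Submodule.map_comap_eq_of_surjective T.mkQ_surjective N]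
    exact (hM _).map T.mkQ
  · exact SFin.of_map hs₀ (by rwa [Submodule.ker_mkQ]) (hQ (N.map T.mkQ))
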